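/- arXiv:2109.11931 — 2 statements merged into one kernel-verified Lean document; each statement's English description precedes it below -/
import Mathlib

section
/- In d = 9, the function f₀(ρ) = (1-ρ²)/(7+5ρ²)³ satisfies on (0,1) the ODE (1-ρ²)f'' + (8/ρ − 2(λ+3)ρ)f' − ((λ+2)(λ+3) − V(ρ))f = 0 with λ = 1, where V(ρ) = 480(7-ρ²)/(7+5ρ²)². -/
/-! The mode `f₀` and its first two derivatives are rational functions whose denominators are
powers of `7 + 5ρ²`. The quotient rule in the form `(p / qⁿ)' = (p' q - n p q') / qⁿ⁺¹` keeps
those denominators as low as possible, and after multiplying the ODE by `ρ (7 + 5ρ²)⁵` it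
becomes a polynomial identity. -/

theorem HasDerivAt.div_pow {𝕜 : Type*} [NontriviallyNormedField 𝕜] {p q : 𝕜 → 𝕜} {p' q' x : 𝕜}
    (hp : HasDerivAt p p' x) (hq : HasDerivAt q q' x) (hx : q x ≠ 0) (n : ℕ) :
    HasDerivAt (fun y => p y / q y ^ n) ((p' * q x - n * p x * q') / q x ^ (n + 1)) x := by
  refine (hp.fun_div (hq.fun_pow n) (pow_ne_zero n hx)).congr_deriv ?_
  rcases n with _ | n
  · simp [mul_div_cancel_right₀ _ hx]
  · field_simp
    push_cast
    ring

lemma hasDerivAt_denom (ρ : ℝ) : HasDerivAt (fun ρ : ℝ => 7 + 5 * ρ ^ 2) (10 * ρ) ρ :=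
  (((hasDerivAt_pow 2 ρ).const_mul 5).const_add 7).congr_deriv (by ring)

lemma denom_ne_zero (ρ : ℝ) : 7 + 5 * ρ ^ 2 ≠ 0 := by positivity

lemma hasDerivAt_mode (ρ : ℝ) :
    HasDerivAt (fun ρ : ℝ => (1 - ρ ^ 2) / (7 + 5 * ρ ^ 2) ^ 3)
      ((20 * ρ ^ 3 - 44 * ρ) / (7 + 5 * ρ ^ 2) ^ 4) ρ := by
  have hp : HasDerivAt (fun ρ : ℝ => 1 - ρ ^ 2) (-(2 * ρ)) ρ := by
    simpa using (hasDerivAt_pow 2 ρ).const_sub 1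
  refine (hp.div_pow (hasDerivAt_denom ρ) (denom_ne_zero ρ) 3).congr_deriv ?_
  norm_num
  ring

lemma hasDerivAt_deriv_mode (ρ : ℝ) :
    HasDerivAt (deriv fun ρ : ℝ => (1 - ρ ^ 2) / (7 + 5 * ρ ^ 2) ^ 3)
      ((-500 * ρ ^ 4 + 1960 * ρ ^ 2 - 308) / (7 + 5 * ρ ^ 2) ^ 5) ρ := by
  rw [funext fun ρ => (hasDerivAt_mode ρ).deriv]
  have hp : HasDerivAt (fun ρ : ℝ => 20 * ρ ^ 3 - 44 * ρ) (60 * ρ ^ 2 - 44) ρ :=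
    (((hasDerivAt_pow 3 ρ).const_mul 20).fun_sub ((hasDerivAt_id ρ).const_mul 44)).congr_deriv
      (by ring)
  refine (hp.div_pow (hasDerivAt_denom ρ) (denom_ne_zero ρ) 4).congr_deriv ?_
  norm_num
  ring

/-- In `d = 9`, `f₀(ρ) = (1-ρ²)/(7+5ρ²)³` solves the `ℓ = 0` spectral ODE
with `λ = 1` and potential `V(ρ) = 480(7-ρ²)/(7+5ρ²)²` on `(0,1)`. -/
theorem spectral_ode_l0_lam1
    (f V : ℝ → ℝ)
    (hf : ∀ ρ : ℝ, f ρ = (1 - ρ ^ 2) / (7 + 5 * ρ ^ 2) ^ 3)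
    (hV : ∀ ρ : ℝ, V ρ = 480 * (7 - ρ ^ 2) / (7 + 5 * ρ ^ 2) ^ 2)
    (lam : ℝ) (hlam : lam = 1) :
    ∀ ρ ∈ Set.Ioo (0 : ℝ) 1,
      (1 - ρ ^ 2) * deriv (deriv f) ρ
        + (8 / ρ - 2 * (lam + 3) * ρ) * deriv f ρ
        - ((lam + 2) * (lam + 3) - V ρ) * f ρ = 0 := by
  intro ρ hρ
  obtain rfl : f = fun ρ => (1 - ρ ^ 2) / (7 + 5 * ρ ^ 2) ^ 3 := funext hf
  have hρ : ρ ≠ 0 := hρ.1.ne'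
  have hden := denom_ne_zero ρ
  rw [(hasDerivAt_deriv_mode ρ).deriv, (hasDerivAt_mode ρ).deriv, hV, hlam]
  field_simp
  ring
end

section
/- In d = 9, the function f₁(ρ) = ρ(77-5ρ²)/(7+5ρ²)³ satisfies on (0,1) the ODE (1-ρ²)f'' + (8/ρ − 2(λ+3)ρ)f' − ((λ+2)(λ+3) + 8/ρ² − V(ρ))f = 0 with λ = 1, where V(ρ) = 480(7-ρ²)/(7+5ρ²)². -/
/-! Since `7 + 5ρ²` never vanishes, `f₁'` and `f₁''` have closed forms over `(7 + 5ρ²)⁴` and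
`(7 + 5ρ²)⁵`; substituting them, the ODE becomes a polynomial identity after clearing the
denominator `ρ²(7 + 5ρ²)⁵`. -/

lemma hasDerivAt_eigenfunction (ρ : ℝ) :
    HasDerivAt (fun x : ℝ => x * (77 - 5 * x ^ 2) / (7 + 5 * x ^ 2) ^ 3)
      ((539 - 2030 * ρ ^ 2 + 75 * ρ ^ 4) / (7 + 5 * ρ ^ 2) ^ 4) ρ := by
  have hden : 7 + 5 * ρ ^ 2 ≠ 0 := by positivity
  have hquot := ((hasDerivAt_id' ρ).fun_mul (((hasDerivAt_pow 2 ρ).const_mul 5).const_sub 77)).fun_div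
    (((hasDerivAt_pow 2 ρ).const_mul 5).const_add 7 |>.fun_pow 3) (pow_ne_zero 3 hden)
  refine hquot.congr_deriv ?_
  field_simp
  ring

lemma hasDerivAt_deriv_eigenfunction (ρ : ℝ) :
    HasDerivAt (fun x : ℝ => (539 - 2030 * x ^ 2 + 75 * x ^ 4) / (7 + 5 * x ^ 2) ^ 4)
      ((-49980 * ρ + 63000 * ρ ^ 3 - 1500 * ρ ^ 5) / (7 + 5 * ρ ^ 2) ^ 5) ρ := by
  have hden : 7 + 5 * ρ ^ 2 ≠ 0 := by positivity
  have hquot := ((((hasDerivAt_pow 2 ρ).const_mul 2030).const_sub 539).fun_add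
      ((hasDerivAt_pow 4 ρ).const_mul 75)).fun_div
    (((hasDerivAt_pow 2 ρ).const_mul 5).const_add 7 |>.fun_pow 4) (pow_ne_zero 4 hden)
  refine hquot.congr_deriv ?_
  field_simp
  ring

/-- In `d = 9`, `f₁(ρ) = ρ(77-5ρ²)/(7+5ρ²)³` solves the `ℓ = 1` spectral ODE
(with centrifugal term `8/ρ²`) with `λ = 1` and potential
`V(ρ) = 480(7-ρ²)/(7+5ρ²)²` on `(0,1)`. -/
theorem spectral_ode_l1_lam1
    (f V : ℝ → ℝ)
    (hf : ∀ ρ : ℝ, f ρ = ρ * (77 - 5 * ρ ^ 2) / (7 + 5 * ρ ^ 2) ^ 3)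
    (hV : ∀ ρ : ℝ, V ρ = 480 * (7 - ρ ^ 2) / (7 + 5 * ρ ^ 2) ^ 2)
    (lam : ℝ) (hlam : lam = 1) :
    ∀ ρ ∈ Set.Ioo (0 : ℝ) 1,
      (1 - ρ ^ 2) * deriv (deriv f) ρ
        + (8 / ρ - 2 * (lam + 3) * ρ) * deriv f ρ
        - ((lam + 2) * (lam + 3) + 8 / ρ ^ 2 - V ρ) * f ρ = 0 := by
  have hf_eq : f = fun x => x * (77 - 5 * x ^ 2) / (7 + 5 * x ^ 2) ^ 3 := funext hf
  have hf' : deriv f = fun x => (539 - 2030 * x ^ 2 + 75 * x ^ 4) / (7 + 5 * x ^ 2) ^ 4 :=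
    funext fun x => hf_eq ▸ (hasDerivAt_eigenfunction x).deriv
  rintro ρ ⟨hρ, -⟩
  have hden : 7 + 5 * ρ ^ 2 ≠ 0 := by positivity
  rw [hf', (hasDerivAt_deriv_eigenfunction ρ).deriv, hf, hV, hlam]
  field_simp
  ring
end
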